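/- arXiv:1805.07571 — 2 statements merged into one kernel-verified Lean document; each statement's English description precedes it below -/
import Mathlib

section
/- Let K and T0 be real numbers and let φ(x) = e^{−2/x}. Then for every x > 0, d²/dx²(K·x⁶·φ''(x)) − d/dx((T0·x² − 6K·x⁴)·φ'(x)) = (16K − 4T0)·x^{−2}·φ(x). In particular, e^{−2/x} is an eigenfunction (with weight 1/x²) of the static beam operator with sextic stiffness K·x⁶ and axial force T0·x² − 6K·x⁴. -/
/-- The static beam operator `w ↦ (EI·w'')'' − (T·w')'` evaluated at `x`. -/
noncomputable def staticBeamLHS (EI T : ℝ → ℝ) (w : ℝ → ℝ) (x : ℝ) : ℝ :=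
  deriv (deriv (fun y => EI y * deriv (deriv w) y)) x
    - deriv (fun y => T y * deriv w y) x

/-!
Every function occurring in the operator is of the form `a(y)·e^{-2/y}` with `a` rational,
and `(a·e^{-2/y})' = (a' + 2a/y²)·e^{-2/y}`, so only the coefficients need to be tracked:
`φ' ↦ 2/y²`, `φ'' ↦ 4/y⁴ − 4/y³`, `K y⁶ φ'' ↦ K(4y² − 4y³)`, whose first two derivatives are
`K(8 − 12y²)` and `K(16/y² − 24 − 24y)`, while `(T0 y² − 6K y⁴) φ' ↦ 2T0 − 12K y²` has derivative
`4T0/y² − 24K − 24K y`. The difference is `(16K − 4T0)/y²`.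
-/

open Real Filter Topology

theorem hasDerivAt_exp_neg_two_div {y : ℝ} (hy : y ≠ 0) :
    HasDerivAt (fun z => exp (-2 / z)) (2 / y ^ 2 * exp (-2 / y)) y := by
  convert ((hasDerivAt_const y (-2 : ℝ)).fun_div (hasDerivAt_id' y) hy).exp using 1
  field_simp
  ring

theorem deriv_eq_mul_exp_neg_two_div {f a : ℝ → ℝ} {a' x : ℝ} (hx : x ≠ 0)
    (hf : ∀ y ≠ 0, f y = a y * exp (-2 / y)) (ha : HasDerivAt a a' x) :
    deriv f x = (a' + 2 * a x / x ^ 2) * exp (-2 / x) := by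
  have hf' : f =ᶠ[𝓝 x] fun y => a y * exp (-2 / y) := (eventually_ne_nhds hx).mono hf
  rw [hf'.deriv_eq, (ha.fun_mul (hasDerivAt_exp_neg_two_div hx)).deriv]
  ring

theorem deriv_exp_neg_two_div {y : ℝ} (hy : y ≠ 0) :
    deriv (fun z => exp (-2 / z)) y = 2 / y ^ 2 * exp (-2 / y) :=
  (hasDerivAt_exp_neg_two_div hy).deriv

theorem deriv_deriv_exp_neg_two_div {y : ℝ} (hy : y ≠ 0) :
    deriv (deriv fun z => exp (-2 / z)) y = (4 / y ^ 4 - 4 / y ^ 3) * exp (-2 / y) := by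
  have ha := (hasDerivAt_const y (2 : ℝ)).div (hasDerivAt_pow 2 y) (pow_ne_zero 2 hy)
  rw [deriv_eq_mul_exp_neg_two_div hy (fun z hz => deriv_exp_neg_two_div hz) ha]
  field_simp
  ring

theorem deriv_sextic_mul_deriv_deriv_exp_neg_two_div (K : ℝ) {y : ℝ} (hy : y ≠ 0) :
    deriv (fun z => K * z ^ 6 * deriv (deriv fun z => exp (-2 / z)) z) y
      = K * (8 - 12 * y ^ 2) * exp (-2 / y) := by
  have ha :=
    (((hasDerivAt_pow 2 y).const_mul 4).fun_sub ((hasDerivAt_pow 3 y).const_mul 4)).const_mul K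
  rw [deriv_eq_mul_exp_neg_two_div hy (fun z hz => ?_) ha]
  · field_simp
    ring
  · rw [deriv_deriv_exp_neg_two_div hz]
    field_simp

theorem deriv_deriv_sextic_mul_deriv_deriv_exp_neg_two_div (K : ℝ) {x : ℝ} (hx : x ≠ 0) :
    deriv (deriv fun z => K * z ^ 6 * deriv (deriv fun z => exp (-2 / z)) z) x
      = K * (16 / x ^ 2 - 24 - 24 * x) * exp (-2 / x) := by
  have ha := ((hasDerivAt_const x (8 : ℝ)).fun_sub ((hasDerivAt_pow 2 x).const_mul 12)).const_mul K
  rw [deriv_eq_mul_exp_neg_two_div hx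
    (fun z hz => deriv_sextic_mul_deriv_deriv_exp_neg_two_div K hz) ha]
  field_simp
  ring

theorem deriv_quartic_mul_deriv_exp_neg_two_div (K T0 : ℝ) {x : ℝ} (hx : x ≠ 0) :
    deriv (fun z => (T0 * z ^ 2 - 6 * K * z ^ 4) * deriv (fun z => exp (-2 / z)) z) x
      = (4 * T0 / x ^ 2 - 24 * K - 24 * K * x) * exp (-2 / x) := by
  have ha := (hasDerivAt_const x (2 * T0)).fun_sub ((hasDerivAt_pow 2 x).const_mul (12 * K))
  rw [deriv_eq_mul_exp_neg_two_div hx (fun z hz => ?_) ha]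
  · field_simp
    ring
  · rw [deriv_exp_neg_two_div hz]
    field_simp
    ring

/-- For `φ(x) = e^{−2/x}` and every `x > 0`,
`d²/dx²(K·x⁶·φ'') − d/dx((T0·x² − 6K·x⁴)·φ') = (16K − 4T0)·x⁻²·φ(x)`:
`e^{−2/x}` is an eigenfunction (with weight `1/x²`) of the static beam operator
with sextic stiffness `K·x⁶` and axial force `T0·x² − 6K·x⁴`. -/
theorem static_beam_sextic_eigenfunction (K T0 : ℝ) (φ : ℝ → ℝ)
    (hφ : ∀ x, φ x = Real.exp (-2 / x)) :
    ∀ x > (0 : ℝ),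
      staticBeamLHS (fun y => K * y ^ 6) (fun y => T0 * y ^ 2 - 6 * K * y ^ 4) φ x
        = (16 * K - 4 * T0) * x ^ (-2 : ℤ) * φ x := by
  obtain rfl : φ = fun x => exp (-2 / x) := funext hφ
  intro x hx
  rw [staticBeamLHS, deriv_deriv_sextic_mul_deriv_deriv_exp_neg_two_div K hx.ne',
    deriv_quartic_mul_deriv_exp_neg_two_div K T0 hx.ne', zpow_neg, zpow_ofNat]
  field_simp
  ring
end

section
/- Let v ≠ 0 and a1 ≠ 0 be real, let m: ℝ → ℝ be any continuous function, and define EI(x) = a1·e^{−v·x} and T(x) = 2·a1·v²·e^{−v·x}. Let s, A1, A2 be real with (A1, A2) ≠ (0,0). Then u(x,t) = e^{s·x}·(A1 + A2·t) satisfies the Euler–Bernoulli beam equation with axial load at every (x,t) ∈ ℝ² if and only if s·(s − v)·(s − 2v)·(s + v) = 0. -/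
/-!
With coefficients proportional to `e^{qx}`, the ansatz `e^{sx}·f(t)` separates: each
`x`-derivative of `e^{sx}` contributes a factor `s`, each coefficient shifts the rate to `s + q`,
and the mass term only sees `f''`. In case (b) `f` is affine, so the mass term drops out and the
left-hand side is `a1·s(s − v)(s − 2v)(s + v)·(A1 + A2·t)·e^{(s−v)x}`; since `A1 + A2·t ≠ 0` for
some `t`, it vanishes identically exactly when the quartic does.
-/

/-- The left-hand side of the Euler–Bernoulli beam equation with axial load:
`∂²/∂x²(EI(x)·u_xx) + m(x)·u_tt − ∂/∂x(T(x)·u_x)` evaluated at `(x, t)`. -/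
noncomputable def beamLHS (EI m T : ℝ → ℝ) (u : ℝ → ℝ → ℝ) (x t : ℝ) : ℝ :=
  deriv (deriv (fun y => EI y * deriv (deriv (fun z => u z t)) y)) x
    + m x * deriv (deriv (fun s => u x s)) t
    - deriv (fun y => T y * deriv (fun z => u z t) y) x

open Real

lemma deriv_const_mul_exp_mul (a b : ℝ) :
    deriv (fun y => a * exp (b * y)) = fun y => a * b * exp (b * y) := by
  funext y
  rw [((((hasDerivAt_id' y).const_mul b).exp).const_mul a).deriv]
  ring

lemma beamLHS_exp_mul_of_exp_coeffs (α β q s : ℝ) (m f : ℝ → ℝ) (x t : ℝ) :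
    beamLHS (fun y => α * exp (q * y)) m (fun y => β * exp (q * y))
        (fun z τ => exp (s * z) * f τ) x t =
      (α * s ^ 2 * (q + s) ^ 2 - β * s * (q + s)) * f t * exp ((q + s) * x)
        + m x * exp (s * x) * deriv (deriv f) t := by
  have hspace : (fun z => exp (s * z) * f t) = fun z => f t * exp (s * z) := by
    funext z; ring
  have hstiff : (fun y => α * exp (q * y) * deriv (deriv (fun z => exp (s * z) * f t)) y) =
      fun y => α * f t * s * s * exp ((q + s) * y) := by
    funext y
    rw [hspace, deriv_const_mul_exp_mul, deriv_const_mul_exp_mul, add_mul, exp_add]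
    ring
  have htension : (fun y => β * exp (q * y) * deriv (fun z => exp (s * z) * f t) y) =
      fun y => β * f t * s * exp ((q + s) * y) := by
    funext y
    rw [hspace, deriv_const_mul_exp_mul, add_mul, exp_add]
    ring
  have htime : deriv (fun τ => exp (s * x) * f τ) = fun τ => exp (s * x) * deriv f τ :=
    deriv_const_mul_field' _
  unfold beamLHS
  rw [hstiff, htension, htime, deriv_const_mul_exp_mul, deriv_const_mul_exp_mul,
    deriv_const_mul_exp_mul, deriv_const_mul_field']
  ring

lemma exists_add_mul_ne_zero {R : Type*} [Ring R] {a b : R} (h : (a, b) ≠ (0, 0)) :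
    ∃ t : R, a + b * t ≠ 0 := by
  by_contra! hzero
  have ha : a = 0 := by simpa using hzero 0
  have hb : b = 0 := by simpa [ha] using hzero 1
  exact h (by rw [ha, hb])

lemma deriv_deriv_const_add_mul (a b : ℝ) : deriv (deriv fun t => a + b * t) = 0 := by
  funext t
  simp

theorem beam_case_b_characterization_general (v a1 : ℝ) (ha1 : a1 ≠ 0)
    (m : ℝ → ℝ) (EI T : ℝ → ℝ)
    (hEI : ∀ x, EI x = a1 * Real.exp (-v * x))
    (hT : ∀ x, T x = 2 * a1 * v ^ 2 * Real.exp (-v * x))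
    (s A1 A2 : ℝ) (hA : (A1, A2) ≠ (0, 0)) :
    (∀ x t : ℝ,
        beamLHS EI m T (fun x t => Real.exp (s * x) * (A1 + A2 * t)) x t = 0) ↔
      s * (s - v) * (s - 2 * v) * (s + v) = 0 := by
  have hLHS : ∀ x t, beamLHS EI m T (fun x t => exp (s * x) * (A1 + A2 * t)) x t =
      a1 * (s * (s - v) * (s - 2 * v) * (s + v)) * (A1 + A2 * t) * exp ((-v + s) * x) := by
    intro x t
    rw [funext hEI, funext hT, beamLHS_exp_mul_of_exp_coeffs, deriv_deriv_const_add_mul]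
    simp only [Pi.zero_apply]
    ring
  constructor
  · intro h
    obtain ⟨t, ht⟩ := exists_add_mul_ne_zero hA
    simpa [hLHS, ha1, ht, exp_ne_zero] using h 0 t
  · intro h x t
    rw [hLHS, h]
    ring

/-- Characterization of exponential solutions in case (b): with
`EI(x) = a1·e^{−v·x}`, `T(x) = 2·a1·v²·e^{−v·x}` and any continuous mass `m`,
`u(x,t) = e^{s·x}·(A1 + A2·t)` (with `(A1,A2) ≠ (0,0)`) solves the beam equation
everywhere iff `s·(s − v)·(s − 2v)·(s + v) = 0`. -/
theorem beam_case_b_characterization (v a1 : ℝ) (hv : v ≠ 0) (ha1 : a1 ≠ 0)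
    (m : ℝ → ℝ) (hm : Continuous m) (EI T : ℝ → ℝ)
    (hEI : ∀ x, EI x = a1 * Real.exp (-v * x))
    (hT : ∀ x, T x = 2 * a1 * v ^ 2 * Real.exp (-v * x))
    (s A1 A2 : ℝ) (hA : (A1, A2) ≠ (0, 0)) :
    (∀ x t : ℝ,
        beamLHS EI m T (fun x t => Real.exp (s * x) * (A1 + A2 * t)) x t = 0) ↔
      s * (s - v) * (s - 2 * v) * (s + v) = 0 :=
  beam_case_b_characterization_general v a1 ha1 m EI T hEI hT s A1 A2 hA
end
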